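/- Every generalised e-merging function is dominated pointwise by a componentwise non-decreasing e-merging function. Concretely, if F : [0,∞)^K → [0,∞) is Borel measurable and F(E_1,…,E_K) is an e-variable for every tuple of e-variables, then there is a componentwise non-decreasing G : [0,∞)^K → [0,∞) with the same e-merging property such that F(u) ≤ G(u) for all u ∈ [0,∞)^K (G can be taken affine). -/

import Mathlib

/-!
Testing the e-merging property of `F` on the law with mass `q i` at the point `u i` and the
remaining mass at the origin gives `∑ q i * F (u i) ≤ 1` whenever `∑ q i ≤ 1` and
`∑ q i * u i k ≤ 1` for every `k`. By a separating hyperplane (a minimax argument) this yields,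
for every finite set of points, weights `w₀, w₁, …, w_K ≥ 0` with total mass at most `1` such that
`F u ≤ w₀ + ∑ w_k * u k` at those points; compactness of the simplex makes one choice of weights
work at all points, and an affine function with such weights is monotone and e-merging.
-/

open BigOperators MeasureTheory
open Finset ENNReal

def IsEMerging {κ : Type*} (F : (κ → ℝ) → ℝ) : Prop :=
  ∀ (X : Type) (_ : MeasurableSpace X) (Q : Measure X), IsProbabilityMeasure Q →
    ∀ E : κ → X → ℝ, (∀ k, Measurable (E k)) → (∀ k x, 0 ≤ E k x) →
    (∀ k, ∫⁻ x, ENNReal.ofReal (E k x) ∂Q ≤ 1) →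
    ∫⁻ x, ENNReal.ofReal (F (fun k => E k x)) ∂Q ≤ 1

theorem lintegral_sum_smul_dirac {α : Type*} [MeasurableSpace α] [MeasurableSingletonClass α]
    [Fintype α] (c g : α → ℝ≥0∞) :
    ∫⁻ x, g x ∂(∑ a, c a • Measure.dirac a) = ∑ a, c a * g a := by
  simp [lintegral_finsetSum_measure, lintegral_dirac]

theorem ofReal_sum_le_sum_ofReal {ι : Type*} (s : Finset ι) (a : ι → ℝ) :
    ENNReal.ofReal (∑ i ∈ s, a i) ≤ ∑ i ∈ s, ENNReal.ofReal (a i) :=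
  Finset.le_sum_of_subadditive _ ofReal_zero.le (fun _ _ => ofReal_add_le) s a

theorem sum_mul_le_one_of_isEMerging {κ ι : Type} [Fintype ι] {F : (κ → ℝ) → ℝ}
    (hF : IsEMerging F) (q : ι → ℝ) (hq : ∀ i, 0 ≤ q i) (u : ι → κ → ℝ) (hu : ∀ i k, 0 ≤ u i k)
    (hqu : ∀ o, ∑ i, q i * Option.elim' 1 (u i) o ≤ 1) :
    ∑ i, q i * F (u i) ≤ 1 := by
  let _ : MeasurableSpace (Option ι) := ⊤
  set Q : Measure (Option ι) :=
    ∑ o, Option.elim' (1 - ∑ i, ENNReal.ofReal (q i)) (fun i => ENNReal.ofReal (q i)) o •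
      Measure.dirac o
  have hQ : ∀ g : Option ι → ℝ≥0∞, ∫⁻ x, g x ∂Q =
      (1 - ∑ i, ENNReal.ofReal (q i)) * g none + ∑ i, ENNReal.ofReal (q i) * g (some i) := by
    intro g
    rw [lintegral_sum_smul_dirac, Fintype.sum_option]
    rfl
  have hmass : ∑ i, ENNReal.ofReal (q i) ≤ 1 := by
    rw [← ofReal_sum_of_nonneg fun i _ => hq i, ← ofReal_one]
    exact ofReal_le_ofReal (by simpa using hqu none)
  have hQprob : IsProbabilityMeasure Q := ⟨by
    simpa [← lintegral_one, hQ] using tsub_add_cancel_of_le hmass⟩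
  set E : κ → Option ι → ℝ := fun k => Option.elim' 0 (fun i => u i k)
  have hE0 : ∀ k o, 0 ≤ E k o := by
    rintro k (_ | i)
    exacts [le_rfl, hu i k]
  have hE1 : ∀ k, ∫⁻ o, ENNReal.ofReal (E k o) ∂Q ≤ 1 := by
    intro k
    simp only [hQ, E, Option.elim', ofReal_zero, mul_zero, zero_add]
    rw [Finset.sum_congr rfl fun i _ => (ofReal_mul (hq i)).symm,
      ← ofReal_sum_of_nonneg fun i _ => mul_nonneg (hq i) (hu i k)]
    exact ofReal_le_one.2 (hqu (some k))
  have key := hF (Option ι) ⊤ Q hQprob E (fun _ => measurable_from_top) hE0 hE1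
  rw [hQ] at key
  refine ofReal_le_one.1 <|
    (ofReal_sum_le_sum_ofReal _ _).trans (le_trans ?_ (le_add_self.trans key))
  simp only [ofReal_mul (hq _)]
  rfl

theorem exists_nonneg_sum_mul_lt_of_disjoint_Ici {ι : Type*} [Fintype ι] {S : Set (ι → ℝ)}
    (hconv : Convex ℝ S) (hcpt : IsCompact S) {c : ι → ℝ} (hdisj : Disjoint S (Set.Ici c)) :
    ∃ q : ι → ℝ, (∀ i, 0 ≤ q i) ∧ ∀ x ∈ S, ∑ i, q i * x i < ∑ i, q i * c i := by
  classical
  obtain ⟨f, a, b, hfS, hab, hfc⟩ :=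
    geometric_hahn_banach_compact_closed hconv hcpt (convex_Ici c) isClosed_Ici hdisj
  set e : ι → ι → ℝ := fun i j => if i = j then 1 else 0
  have hf : ∀ x, f x = ∑ i, f (e i) * x i := fun x => by
    rw [← f.coe_coe, LinearMap.pi_apply_eq_sum_univ]
    simp [e, mul_comm]
  refine ⟨fun i => f (e i), fun i => ?_, fun x hx => ?_⟩
  · by_contra! hi
    -- moving from `c` along `e i` lowers `f` down to `b` while staying in `Set.Ici c`
    have hmem : c ≤ c + ((b - f c) / f (e i)) • e i := by
      refine le_add_of_nonneg_right (smul_nonneg ?_ fun j => ?_)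
      · exact div_nonneg_of_nonpos (by linarith [hfc c Set.self_mem_Ici]) hi.le
      · simp only [e]; split_ifs <;> norm_num
    have := hfc _ hmem
    rw [map_add, map_smul, smul_eq_mul, div_mul_cancel₀ _ hi.ne] at this
    linarith
  · rw [← hf, ← hf]
    linarith [hfS x hx, hfc c Set.self_mem_Ici]

theorem exists_mem_stdSimplex_forall_le_sum_mul_of_fintype {ι κ : Type*} [Fintype ι] [Fintype κ]
    (f : ι → ℝ) (v : ι → κ → ℝ)
    (h : ∀ q : ι → ℝ, (∀ i, 0 ≤ q i) → (∀ j, ∑ i, q i * v i j ≤ 1) → ∑ i, q i * f i ≤ 1) :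
    ∃ w ∈ stdSimplex ℝ (Option κ), ∀ i, f i ≤ ∑ j, v i j * w (some j) := by
  -- `w none` is a slack coordinate: `w ∘ some` ranges over `{w ≥ 0 | ∑ j, w j ≤ 1}`.
  classical
  set L : (Option κ → ℝ) →ₗ[ℝ] ι → ℝ :=
    (Matrix.of v).mulVecLin ∘ₗ LinearMap.funLeft ℝ ℝ some
  have hL : ∀ w i, L w i = ∑ j, v i j * w (some j) := fun _ _ => rfl
  by_contra! hno
  obtain ⟨q, hq0, hq⟩ := exists_nonneg_sum_mul_lt_of_disjoint_Ici
    ((convex_stdSimplex ℝ _).linear_image L)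
    ((isCompact_stdSimplex ℝ _).image L.continuous_of_finiteDimensional) (c := f) (by
      refine Set.disjoint_left.2 ?_
      rintro _ ⟨w, hw, rfl⟩ hle
      obtain ⟨i, hi⟩ := hno w hw
      exact (hle i).not_gt (by rw [hL]; exact hi))
  have hvertex : ∀ o, ∑ i, q i * L (Pi.single o 1) i < ∑ i, q i * f i := fun o =>
    hq _ ⟨_, single_mem_stdSimplex ℝ o, rfl⟩
  set A := ∑ i, q i * f i
  have hA : 0 < A := by simpa [hL] using hvertex none
  have hAj : ∀ j, ∑ i, q i * v i j < A := fun j => by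
    simpa [hL, Pi.single_apply] using hvertex (some j)
  -- rescaling `q` by any `t` strictly between `max 0 (∑ i, q i * v i j)` and `A` contradicts `h`
  set s : Finset ℝ := insert 0 (univ.image fun j => ∑ i, q i * v i j)
  have hs : s.Nonempty := insert_nonempty _ _
  obtain ⟨t, hst, htA⟩ := exists_between ((s.max'_lt_iff hs).2 (by simpa [s] using ⟨hA, hAj⟩))
  have ht : 0 < t := (s.le_max' 0 (mem_insert_self _ _)).trans_lt hst
  have := h (fun i => q i / t) (fun i => div_nonneg (hq0 i) ht.le) fun j => by
    simp_rw [div_mul_eq_mul_div, ← sum_div]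
    exact (div_le_one ht).2 ((s.le_max' _ (by simp [s])).trans hst.le)
  simp_rw [div_mul_eq_mul_div, ← sum_div, div_le_one ht] at this
  linarith

theorem exists_mem_stdSimplex_forall_le_sum_mul {P κ : Type*} [Fintype κ]
    (f : P → ℝ) (v : P → κ → ℝ)
    (h : ∀ (s : Finset P) (q : s → ℝ), (∀ i, 0 ≤ q i) → (∀ j, ∑ i, q i * v i j ≤ 1) →
      ∑ i, q i * f i ≤ 1) :
    ∃ w ∈ stdSimplex ℝ (Option κ), ∀ p, f p ≤ ∑ j, v p j * w (some j) := by
  set C : P → Set (Option κ → ℝ) := fun p => {w | f p ≤ ∑ j, v p j * w (some j)}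
  have hC : ∀ p, IsClosed (C p) := fun p => isClosed_le continuous_const (by fun_prop)
  have hfin : ∀ s : Finset P, (stdSimplex ℝ (Option κ) ∩ ⋂ p ∈ s, C p).Nonempty := fun s => by
    obtain ⟨w, hw, hle⟩ :=
      exists_mem_stdSimplex_forall_le_sum_mul_of_fintype (fun p : s => f p) (fun p => v p) (h s)
    exact ⟨w, hw, Set.mem_iInter₂.2 fun p hp => hle ⟨p, hp⟩⟩
  obtain ⟨w, hw, hwC⟩ := (isCompact_stdSimplex ℝ (Option κ)).inter_iInter_nonempty C hC hfin
  exact ⟨w, hw, Set.mem_iInter.1 hwC⟩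

-- With `Option.elim' 1 u none = 1` the function below is `u ↦ w none + ∑ k, u k * w (some k)`.
theorem isEMerging_sum_mul {κ : Type*} [Fintype κ] {w : Option κ → ℝ} (hw0 : ∀ o, 0 ≤ w o)
    (hw1 : ∑ o, w o ≤ 1) : IsEMerging fun u => ∑ o, Option.elim' 1 u o * w o := by
  intro X _ Q _ E hEm hE0 hE1
  set Ē : Option κ → X → ℝ := fun o x => Option.elim' 1 (fun k => E k x) o
  have hĒm : ∀ o, Measurable fun x => ENNReal.ofReal (Ē o x) := by
    rintro (_ | k)
    exacts [by simp [Ē], (hEm k).ennreal_ofReal]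
  have hĒ0 : ∀ o x, 0 ≤ Ē o x := by
    rintro (_ | k) x
    exacts [zero_le_one, hE0 k x]
  have hĒ1 : ∀ o, ∫⁻ x, ENNReal.ofReal (Ē o x) ∂Q ≤ 1 := by
    rintro (_ | k)
    exacts [by simp [Ē], hE1 k]
  calc ∫⁻ x, ENNReal.ofReal (∑ o, Ē o x * w o) ∂Q
      = ∫⁻ x, ∑ o, ENNReal.ofReal (w o) * ENNReal.ofReal (Ē o x) ∂Q := by
        refine lintegral_congr fun x => ?_
        rw [ofReal_sum_of_nonneg fun o _ => mul_nonneg (hĒ0 o x) (hw0 o)]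
        simp_rw [mul_comm (Ē _ x), ofReal_mul (hw0 _)]
    _ = ∑ o, ENNReal.ofReal (w o) * ∫⁻ x, ENNReal.ofReal (Ē o x) ∂Q := by
        rw [lintegral_finsetSum _ fun o _ => (hĒm o).const_mul _]
        simp_rw [lintegral_const_mul _ (hĒm _)]
    _ ≤ ∑ o, ENNReal.ofReal (w o) := sum_le_sum fun o _ => mul_le_of_le_one_right' (hĒ1 o)
    _ ≤ 1 := by
        rw [← ofReal_sum_of_nonneg fun o _ => hw0 o]
        exact ofReal_le_one.2 hw1

theorem stmt_9_general (K : ℕ) (F : (Fin K → ℝ) → ℝ)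
    (hmerge : ∀ (X : Type) (_ : MeasurableSpace X) (Q : Measure X),
      IsProbabilityMeasure Q →
      ∀ E : Fin K → X → ℝ, (∀ k, Measurable (E k)) → (∀ k x, 0 ≤ E k x) →
      (∀ k, ∫⁻ x, ENNReal.ofReal (E k x) ∂Q ≤ 1) →
      ∫⁻ x, ENNReal.ofReal (F (fun k => E k x)) ∂Q ≤ 1) :
    ∃ G : (Fin K → ℝ) → ℝ,
      (∀ u : Fin K → ℝ, (∀ k, 0 ≤ u k) → 0 ≤ G u) ∧
      (∀ u v : Fin K → ℝ, (∀ k, 0 ≤ u k) → (∀ k, 0 ≤ v k) → (∀ k, u k ≤ v k) →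
        G u ≤ G v) ∧
      (∀ (X : Type) (_ : MeasurableSpace X) (Q : Measure X),
        IsProbabilityMeasure Q →
        ∀ E : Fin K → X → ℝ, (∀ k, Measurable (E k)) → (∀ k x, 0 ≤ E k x) →
        (∀ k, ∫⁻ x, ENNReal.ofReal (E k x) ∂Q ≤ 1) →
        ∫⁻ x, ENNReal.ofReal (G (fun k => E k x)) ∂Q ≤ 1) ∧
      (∀ u : Fin K → ℝ, (∀ k, 0 ≤ u k) → F u ≤ G u) := by
  obtain ⟨w, ⟨hw0, hw1⟩, hFw⟩ := exists_mem_stdSimplex_forall_le_sum_mul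
    (fun u : {u : Fin K → ℝ // ∀ k, 0 ≤ u k} => F u) (fun u => Option.elim' 1 u.1)
    fun s q hq hqu => sum_mul_le_one_of_isEMerging hmerge q hq _ (fun i => i.1.2) hqu
  refine ⟨fun u => ∑ o, Option.elim' 1 u o * w (some o), fun u hu => ?_,
    fun u v _ _ huv => ?_, isEMerging_sum_mul (fun o => hw0 _) ?_, fun u hu => hFw ⟨u, hu⟩⟩
  · refine sum_nonneg fun o _ => mul_nonneg ?_ (hw0 _)
    cases o
    exacts [zero_le_one, hu _]
  · refine sum_le_sum fun o _ => mul_le_mul_of_nonneg_right ?_ (hw0 _)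
    cases o
    exacts [le_rfl, huv _]
  · rw [Fintype.sum_option] at hw1
    linarith [hw0 none]

/-- every generalised e-merging function is dominated pointwise on
the orthant by a componentwise non-decreasing, nonnegative function with the
same e-merging property. -/
theorem stmt_9 (K : ℕ) (hK : 1 ≤ K) (F : (Fin K → ℝ) → ℝ)
    (hFmeas : Measurable F)
    (hF0 : ∀ u : Fin K → ℝ, (∀ k, 0 ≤ u k) → 0 ≤ F u)
    (hmerge : ∀ (X : Type) (_ : MeasurableSpace X) (Q : Measure X),
      IsProbabilityMeasure Q →
      ∀ E : Fin K → X → ℝ, (∀ k, Measurable (E k)) → (∀ k x, 0 ≤ E k x) →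
      (∀ k, ∫⁻ x, ENNReal.ofReal (E k x) ∂Q ≤ 1) →
      ∫⁻ x, ENNReal.ofReal (F (fun k => E k x)) ∂Q ≤ 1) :
    ∃ G : (Fin K → ℝ) → ℝ,
      (∀ u : Fin K → ℝ, (∀ k, 0 ≤ u k) → 0 ≤ G u) ∧
      (∀ u v : Fin K → ℝ, (∀ k, 0 ≤ u k) → (∀ k, 0 ≤ v k) → (∀ k, u k ≤ v k) →
        G u ≤ G v) ∧
      (∀ (X : Type) (_ : MeasurableSpace X) (Q : Measure X),
        IsProbabilityMeasure Q →
        ∀ E : Fin K → X → ℝ, (∀ k, Measurable (E k)) → (∀ k x, 0 ≤ E k x) →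
        (∀ k, ∫⁻ x, ENNReal.ofReal (E k x) ∂Q ≤ 1) →
        ∫⁻ x, ENNReal.ofReal (G (fun k => E k x)) ∂Q ≤ 1) ∧
      (∀ u : Fin K → ℝ, (∀ k, 0 ≤ u k) → F u ≤ G u) :=
  stmt_9_general K F hmerge
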